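/- For K = ℝ₊^m with compact base the unit simplex Δ_m, the radius of robust feasibility equals the distance exactly: ρ(Ā, b̄) = dist(0_{n+1}, E(Ā, b̄, Δ_m)) = inf{ t : ∃ z ∈ ℝ^n, s ∈ ℝ, λ ∈ ℝ₊^m, Σ_i λ_i = 1, ‖(z,s)‖ ≤ t, z = Āᵀλ, s ≥ −b̄ᵀλ }. -/

import Mathlib

open Finset Pointwise

noncomputable def enorm {k : ℕ} (v : Fin k → ℝ) : ℝ := Real.sqrt (∑ i, v i ^ 2)

def coneHull {k : ℕ} (X : Set (Fin k → ℝ)) : Set (Fin k → ℝ) :=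
  {y | y = 0 ∨ ∃ t : ℝ, 0 ≤ t ∧ ∃ c ∈ convexHull ℝ X, y = t • c}

def dualCone {m : ℕ} (K : Set (Fin m → ℝ)) : Set (Fin m → ℝ) :=
  {a | ∀ x ∈ K, 0 ≤ ∑ i, a i * x i}

def Feas {m n : ℕ} (K : Set (Fin m → ℝ)) (Abar : Fin m → Fin n → ℝ) (bbar : Fin m → ℝ)
    (r : Fin m → ℝ) : Set (Fin n → ℝ) :=
  {x | ∀ (a : Fin m → Fin n → ℝ) (b : Fin m → ℝ),
      (∀ i, enorm (Fin.snoc (a i - Abar i) (b i - bbar i)) ≤ r i) →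
      (fun i => (∑ j, a i j * x j) + b i) ∈ -K}

def Adm {m n : ℕ} (K : Set (Fin m → ℝ)) (Abar : Fin m → Fin n → ℝ) (bbar : Fin m → ℝ) :
    Set (Fin m → ℝ) :=
  {r | (∀ i, 0 ≤ r i) ∧ (Feas K Abar bbar r).Nonempty}

noncomputable def rrf {m n : ℕ} (K : Set (Fin m → ℝ)) (Abar : Fin m → Fin n → ℝ)
    (bbar : Fin m → ℝ) : ℝ :=
  sSup {α : ℝ | 0 ≤ α ∧ (fun _ => α) ∈ Adm K Abar bbar}

def Epi {m n : ℕ} (Abar : Fin m → Fin n → ℝ) (bbar : Fin m → ℝ) (B : Set (Fin m → ℝ)) :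
    Set (Fin (n + 1) → ℝ) :=
  {y | ∃ l ∈ B, ∃ w : ℝ, 0 ≤ w ∧
    y = Fin.snoc (fun j => ∑ i, l i * Abar i j) (-(∑ i, l i * bbar i) + w)}

noncomputable def edist0 {m n : ℕ} (Abar : Fin m → Fin n → ℝ) (bbar : Fin m → ℝ)
    (B : Set (Fin m → ℝ)) : ℝ :=
  sInf {t : ℝ | ∃ y ∈ Epi Abar bbar B, t = _root_.enorm y}

def IsCompactBase {m : ℕ} (C B : Set (Fin m → ℝ)) : Prop :=
  IsCompact B ∧ Convex ℝ B ∧ B ⊆ C ∧ (0 : Fin m → ℝ) ∉ B ∧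
    C = {y | ∃ t : ℝ, 0 ≤ t ∧ ∃ b ∈ B, y = t • b}

def IsClosedConvexCone {m : ℕ} (K : Set (Fin m → ℝ)) : Prop :=
  IsClosed K ∧ Convex ℝ K ∧ ∀ t : ℝ, 0 ≤ t → ∀ x ∈ K, t • x ∈ K

noncomputable def c1 {m : ℕ} (n : ℕ) (B : Set (Fin m → ℝ)) : ℝ :=
  (sSup {t : ℝ | ∃ l ∈ B, ∃ u : Fin m → (Fin (n + 1) → ℝ),
    (∀ i, _root_.enorm (u i) ≤ 1) ∧ t = _root_.enorm (∑ i, l i • u i)})⁻¹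

noncomputable def c2 {m : ℕ} (B : Set (Fin m → ℝ)) : ℝ :=
  (sInf {t : ℝ | ∃ l ∈ B, t = ∑ i, |l i|})⁻¹

/-!
A point `x` is robustly feasible at radius `α` iff `⟪(āᵢ, b̄ᵢ), (x, 1)⟫ + α ‖(x, 1)‖ ≤ 0` for every
`i`, the worst perturbation of row `i` being `α (x, 1) / ‖(x, 1)‖`. Let
`D = conv {(āᵢ, b̄ᵢ)} + ℝ₊ (0, -1)`, the reflection of `E(Ā, b̄, Δ_m)` in the last coordinate.
Averaging the constraints over `λ ∈ Δ_m` and applying Cauchy–Schwarz gives `α ≤ ‖y‖` for all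
`y ∈ D`. Conversely, if `α < d = dist (0, D)`, a hyperplane separating `D` from the open ball of
radius `d` yields `q ≠ 0` with `⟪q, y⟫ ≥ d ‖q‖` on `D`. Then `-q` satisfies the constraints
strictly, so it can be nudged to have a positive last coordinate and rescaled to the form `(x, 1)`.
-/

open scoped RealInnerProductSpace

section RobustHalfspaces

variable {E : Type*} [NormedAddCommGroup E] [InnerProductSpace ℝ E]

theorem forall_norm_le_inner_add_nonpos_iff {α : ℝ} (hα : 0 ≤ α) (c p : E) :
    (∀ δ : E, ‖δ‖ ≤ α → ⟪c + δ, p⟫ ≤ 0) ↔ ⟪c, p⟫ + α * ‖p‖ ≤ 0 := by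
  constructor
  · intro h
    rcases (norm_nonneg p).eq_or_lt with hp | hp
    · simpa [← hp] using h 0 (by simpa using hα)
    have hworst := h ((α / ‖p‖) • p) <| by
      rw [norm_smul, Real.norm_of_nonneg (by positivity), div_mul_cancel₀ _ hp.ne']
    rw [inner_add_left, real_inner_smul_left, real_inner_self_eq_norm_sq] at hworst
    convert hworst using 2
    field_simp
  · intro h δ hδ
    calc ⟪c + δ, p⟫ = ⟪c, p⟫ + ⟪δ, p⟫ := inner_add_left c δ p
      _ ≤ ⟪c, p⟫ + α * ‖p‖ := by
          gcongr
          exact (real_inner_le_norm δ p).trans (by gcongr)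
      _ ≤ 0 := h

theorem exists_inner_eq_neg_one_of_inner_neg {ι : Type*} {v : ι → E} {e p : E} {α : ℝ}
    (he : ⟪e, p⟫ < 0) (hv : ∀ i, ⟪v i, p⟫ + α * ‖p‖ ≤ 0) :
    ∃ p' : E, ⟪e, p'⟫ = -1 ∧ ∀ i, ⟪v i, p'⟫ + α * ‖p'‖ ≤ 0 := by
  have ht : 0 < (-⟪e, p⟫)⁻¹ := inv_pos.2 (neg_pos.2 he)
  refine ⟨(-⟪e, p⟫)⁻¹ • p, ?_, fun i => ?_⟩
  · rw [real_inner_smul_right, inv_mul_eq_div, div_neg_self he.ne]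
  · rw [real_inner_smul_right, norm_smul, Real.norm_of_nonneg ht.le]
    nlinarith [hv i]

theorem Convex.exists_mul_norm_le_inner [CompleteSpace E] {D : Set E} (hD : Convex ℝ D)
    (hne : D.Nonempty) {r : ℝ} (hr : 0 < r) (hfar : ∀ y ∈ D, r ≤ ‖y‖) :
    ∃ q : E, q ≠ 0 ∧ ∀ y ∈ D, r * ‖q‖ ≤ ⟪q, y⟫ := by
  obtain ⟨f, u, hball, hfD⟩ := geometric_hahn_banach_open (convex_ball 0 r) Metric.isOpen_ball hD
    (Set.disjoint_left.2 fun y hy hyD => (hfar y hyD).not_gt (by simpa using hy))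
  set q := (InnerProductSpace.toDual ℝ E).symm f
  have hf : ∀ x, f x = ⟪q, x⟫ := fun x => InnerProductSpace.toDual_symm_apply.symm
  have hu : 0 < u := by simpa using hball 0 (Metric.mem_ball_self hr)
  obtain ⟨y₀, hy₀⟩ := hne
  have hq : q ≠ 0 := by
    intro hq
    have := hfD y₀ hy₀
    rw [hf, hq, inner_zero_left] at this
    linarith
  have hqpos := norm_pos_iff.2 hq
  refine ⟨q, hq, fun y hy => le_trans ?_ (hf y ▸ hfD y hy)⟩
  -- otherwise the point `(u / ‖q‖²) • q` lies in the ball and `f` takes the value `u` there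
  by_contra! hlt
  have hin := hball ((u / ‖q‖ ^ 2) • q) <| by
    rw [mem_ball_zero_iff, norm_smul, Real.norm_of_nonneg (by positivity)]
    field_simp
    linarith
  rw [hf, real_inner_smul_right, real_inner_self_eq_norm_sq] at hin
  field_simp at hin
  exact hin.false

theorem IsOpen.exists_mem_inner_neg {U : Set E} (hU : IsOpen U) {x e : E} (hx : x ∈ U)
    (hxe : ⟪e, x⟫ ≤ 0) (he : e ≠ 0) : ∃ p ∈ U, ⟪e, p⟫ < 0 := by
  obtain ⟨ε, hε, hball⟩ := Metric.isOpen_iff.1 hU x hx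
  have hepos := norm_pos_iff.2 he
  refine ⟨x - (ε / (2 * ‖e‖)) • e, hball ?_, ?_⟩
  · rw [Metric.mem_ball, dist_eq_norm, sub_sub_cancel_left, norm_neg, norm_smul,
      Real.norm_of_nonneg (by positivity)]
    field_simp
    linarith
  · rw [inner_sub_right, real_inner_smul_right, real_inner_self_eq_norm_sq]
    have : 0 < ε / (2 * ‖e‖) * ‖e‖ ^ 2 := by positivity
    linarith

end RobustHalfspaces

theorem nonneg_of_forall_le_add_mul {a b c : ℝ} (h : ∀ w : ℝ, 0 ≤ w → a ≤ b + w * c) : 0 ≤ c := by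
  by_contra! hc
  have hw := h ((|b - a| + 1) / -c) (div_nonneg (by positivity) (neg_nonneg.2 hc.le))
  rw [div_mul_eq_mul_div, div_neg, mul_div_cancel_right₀ _ hc.ne] at hw
  linarith [le_abs_self (b - a)]

theorem Real.sSup_eq_of_Ico_subset_of_subset_Icc {A : Set ℝ} {d : ℝ} (hd : 0 ≤ d)
    (hlo : Set.Ico 0 d ⊆ A) (hhi : A ⊆ Set.Icc 0 d) : sSup A = d := by
  refine le_antisymm (Real.sSup_le (fun a ha => (hhi ha).2) hd) ?_
  rcases hd.eq_or_lt with rfl | hd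
  · exact Real.sSup_nonneg fun a ha => (hhi ha).1
  · calc d = sSup (Set.Ico 0 d) := (csSup_Ico hd).symm
      _ ≤ sSup A := csSup_le_csSup ⟨d, fun a ha => (hhi ha).2⟩ ⟨0, le_rfl, hd⟩ hlo

section HullAddRay

variable {ι E : Type*} [Fintype ι] [NormedAddCommGroup E] [InnerProductSpace ℝ E]

/-- `conv {v i} + ℝ₊ e`. -/
def hullAddRay (v : ι → E) (e : E) : Set E :=
  (Fintype.linearCombination ℝ v).coprod (LinearMap.toSpanSingleton ℝ E e) ''
    (stdSimplex ℝ ι ×ˢ Set.Ici 0)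

variable {v : ι → E} {e : E}

theorem mem_hullAddRay {y : E} :
    y ∈ hullAddRay v e ↔ ∃ l ∈ stdSimplex ℝ ι, ∃ w : ℝ, 0 ≤ w ∧ ∑ i, l i • v i + w • e = y := by
  simp [hullAddRay, Fintype.linearCombination_apply, and_assoc]

theorem convex_hullAddRay : Convex ℝ (hullAddRay v e) :=
  ((convex_stdSimplex ℝ ι).prod (convex_Ici 0)).linear_image _

theorem add_smul_mem_hullAddRay (i : ι) {w : ℝ} (hw : 0 ≤ w) : v i + w • e ∈ hullAddRay v e := by
  classical
  exact mem_hullAddRay.2 ⟨Pi.single i 1, single_mem_stdSimplex ℝ i, w, hw, by simp⟩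

theorem hullAddRay_of_isEmpty [IsEmpty ι] : hullAddRay v e = ∅ := by
  simp [hullAddRay, stdSimplex_of_isEmpty_index]

theorem le_norm_of_mem_hullAddRay {p y : E} {α : ℝ} (hp : p ≠ 0) (he : ⟪e, p⟫ ≤ 0)
    (hv : ∀ i, ⟪v i, p⟫ + α * ‖p‖ ≤ 0) (hy : y ∈ hullAddRay v e) : α ≤ ‖y‖ := by
  obtain ⟨l, hl, w, hw, rfl⟩ := mem_hullAddRay.1 hy
  have hyp : ⟪∑ i, l i • v i + w • e, p⟫ + α * ‖p‖ ≤ 0 :=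
    calc _ = ∑ i, l i * (⟪v i, p⟫ + α * ‖p‖) + w * ⟪e, p⟫ := by
          simp only [inner_add_left, sum_inner, real_inner_smul_left, mul_add,
            Finset.sum_add_distrib, ← Finset.sum_mul, hl.2]
          ring
      _ ≤ 0 := add_nonpos
          (Finset.sum_nonpos fun i _ => mul_nonpos_of_nonneg_of_nonpos (hl.1 i) (hv i))
          (mul_nonpos_of_nonneg_of_nonpos hw he)
  refine le_of_mul_le_mul_right ?_ (norm_pos_iff.2 hp)
  linarith [neg_le_of_abs_le (abs_real_inner_le_norm (∑ i, l i • v i + w • e) p)]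

theorem exists_inner_eq_neg_one_of_lt_norm [CompleteSpace E] [Nonempty ι] (he : e ≠ 0)
    {α r : ℝ} (hα : 0 ≤ α) (hαr : α < r) (hfar : ∀ y ∈ hullAddRay v e, r ≤ ‖y‖) :
    ∃ p : E, ⟪e, p⟫ = -1 ∧ ∀ i, ⟪v i, p⟫ + α * ‖p‖ ≤ 0 := by
  obtain ⟨q, hq, hsep⟩ := convex_hullAddRay.exists_mul_norm_le_inner
    ⟨_, add_smul_mem_hullAddRay (Classical.arbitrary ι) le_rfl⟩ (hα.trans_lt hαr) hfar
  have hsep' : ∀ i, ∀ w : ℝ, 0 ≤ w → r * ‖q‖ ≤ ⟪q, v i⟫ + w * ⟪q, e⟫ := fun i w hw => by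
    simpa [inner_add_right, real_inner_smul_right] using hsep _ (add_smul_mem_hullAddRay i hw)
  have hqe : 0 ≤ ⟪q, e⟫ := nonneg_of_forall_le_add_mul (hsep' (Classical.arbitrary ι))
  set U := {p : E | ∀ i, ⟪v i, p⟫ + α * ‖p‖ < 0}
  have hU : IsOpen U := by
    simp only [U, Set.ofPred_forall]
    exact isOpen_iInter_of_finite fun i => isOpen_lt (by fun_prop) continuous_const
  have hqU : -q ∈ U := fun i => by
    have := hsep' i 0 le_rfl
    rw [inner_neg_right, norm_neg, real_inner_comm]
    nlinarith [norm_pos_iff.2 hq]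
  obtain ⟨p, hpU, hpe⟩ := hU.exists_mem_inner_neg hqU
    (by rw [inner_neg_right, real_inner_comm]; linarith) he
  exact exists_inner_eq_neg_one_of_inner_neg hpe fun i => (hpU i).le

theorem sSup_robust_eq_sInf_norm_hullAddRay [CompleteSpace E] (v : ι → E) (he : e ≠ 0) :
    sSup {α : ℝ | 0 ≤ α ∧ ∃ p : E, ⟪e, p⟫ = -1 ∧ ∀ i, ⟪v i, p⟫ + α * ‖p‖ ≤ 0} =
      sInf (norm '' hullAddRay v e) := by
  rcases isEmpty_or_nonempty ι with hι | hι
  · have hsolv : ∃ p : E, ⟪e, p⟫ = -1 ∧ ∀ i, ⟪v i, p⟫ + 0 * ‖p‖ ≤ 0 :=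
      exists_inner_eq_neg_one_of_inner_neg (p := -e)
        (by simpa [inner_neg_right] using real_inner_self_pos.2 he) hι.elim
    rw [hullAddRay_of_isEmpty, Set.image_empty, Real.sInf_empty]
    refine Real.sSup_of_not_bddAbove fun hbdd => not_bddAbove_Ici (0 : ℝ) (hbdd.mono fun α hα => ?_)
    exact ⟨hα, hsolv.imp fun p hp => ⟨hp.1, hι.elim⟩⟩
  · have hbdd : BddBelow (norm '' hullAddRay v e) := ⟨0, by rintro _ ⟨y, -, rfl⟩; positivity⟩
    refine Real.sSup_eq_of_Ico_subset_of_subset_Icc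
      (Real.sInf_nonneg (by rintro _ ⟨y, -, rfl⟩; positivity)) ?_ ?_
    · rintro α ⟨hα, hαd⟩
      exact ⟨hα, exists_inner_eq_neg_one_of_lt_norm he hα hαd
        fun y hy => csInf_le hbdd ⟨y, hy, rfl⟩⟩
    · rintro α ⟨hα, p, hpe, hv⟩
      have hp : p ≠ 0 := by rintro rfl; simp at hpe
      refine ⟨hα, le_csInf ⟨_, _, add_smul_mem_hullAddRay (Classical.arbitrary ι) le_rfl, rfl⟩ ?_⟩
      rintro _ ⟨y, hy, rfl⟩
      exact le_norm_of_mem_hullAddRay hp (by rw [hpe]; norm_num) hv hy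

end HullAddRay

section RobustLinearSystem

variable {m n : ℕ}

theorem enorm_eq_norm_toLp {k : ℕ} (v : Fin k → ℝ) : _root_.enorm v = ‖WithLp.toLp 2 v‖ := by
  simp [_root_.enorm, EuclideanSpace.norm_eq]

theorem enorm_snoc_neg (z : Fin n → ℝ) (s : ℝ) :
    _root_.enorm (Fin.snoc z (-s) : Fin (n + 1) → ℝ) =
      _root_.enorm (Fin.snoc z s : Fin (n + 1) → ℝ) := by
  simp [_root_.enorm, Fin.sum_univ_castSucc]

theorem inner_toLp_snoc (a b : Fin n → ℝ) (s t : ℝ) :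
    ⟪WithLp.toLp 2 (Fin.snoc a s : Fin (n + 1) → ℝ), WithLp.toLp 2 (Fin.snoc b t)⟫ =
      ∑ j, a j * b j + s * t := by
  simp [PiLp.inner_apply, Fin.sum_univ_castSucc, mul_comm]

noncomputable def augRow (Abar : Fin m → Fin n → ℝ) (bbar : Fin m → ℝ) (i : Fin m) :
    EuclideanSpace ℝ (Fin (n + 1)) :=
  WithLp.toLp 2 (Fin.snoc (Abar i) (bbar i))

variable (Abar : Fin m → Fin n → ℝ) (bbar : Fin m → ℝ)

theorem mem_feas_const_iff_forall_perturbation (α : ℝ) (x : Fin n → ℝ) :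
    x ∈ Feas {v | ∀ i, 0 ≤ v i} Abar bbar (fun _ => α) ↔
      ∀ i, ∀ δ : EuclideanSpace ℝ (Fin (n + 1)), ‖δ‖ ≤ α →
        ⟪augRow Abar bbar i + δ, WithLp.toLp 2 (Fin.snoc x 1)⟫ ≤ 0 := by
  have hinner : ∀ i (a : Fin n → ℝ) (b : ℝ),
      ⟪augRow Abar bbar i + WithLp.toLp 2 (Fin.snoc (a - Abar i) (b - bbar i)),
        WithLp.toLp 2 (Fin.snoc x 1)⟫ = ∑ j, a j * x j + b := by
    intro i a b
    simp only [augRow, inner_add_left, inner_toLp_snoc, Pi.sub_apply, sub_mul,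
      Finset.sum_sub_distrib]
    ring
  simp only [Feas, Set.mem_ofPred_eq, Set.mem_neg, Pi.neg_apply, neg_nonneg]
  constructor
  · intro hx i δ hδ
    -- perturb every row by `δ`
    have hδ' : WithLp.toLp 2 (Fin.snoc (Fin.init δ.ofLp) (δ.ofLp (Fin.last n))) = δ := by
      rw [Fin.snoc_init_self]
    have hrow := hinner i (Abar i + Fin.init δ.ofLp) (bbar i + δ.ofLp (Fin.last n))
    rw [add_sub_cancel_left, add_sub_cancel_left, hδ'] at hrow
    rw [hrow]
    exact hx (fun i' => Abar i' + Fin.init δ.ofLp) (fun i' => bbar i' + δ.ofLp (Fin.last n))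
      (fun i' => by simpa [enorm_eq_norm_toLp, hδ'] using hδ) i
  · intro h a b hab i
    have := h i _ ((enorm_eq_norm_toLp _).symm.trans_le (hab i))
    rwa [hinner] at this

theorem mem_feas_const_iff {α : ℝ} (hα : 0 ≤ α) (x : Fin n → ℝ) :
    x ∈ Feas {v | ∀ i, 0 ≤ v i} Abar bbar (fun _ => α) ↔
      ∀ i, ⟪augRow Abar bbar i, WithLp.toLp 2 (Fin.snoc x 1)⟫ +
        α * ‖WithLp.toLp 2 (Fin.snoc x 1 : Fin (n + 1) → ℝ)‖ ≤ 0 := by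
  simp only [mem_feas_const_iff_forall_perturbation, forall_norm_le_inner_add_nonpos_iff hα]

theorem feas_const_nonempty_iff {α : ℝ} (hα : 0 ≤ α) :
    (Feas {v | ∀ i, 0 ≤ v i} Abar bbar (fun _ => α)).Nonempty ↔
      ∃ p : EuclideanSpace ℝ (Fin (n + 1)), ⟪EuclideanSpace.single (Fin.last n) (-1), p⟫ = -1 ∧
        ∀ i, ⟪augRow Abar bbar i, p⟫ + α * ‖p‖ ≤ 0 := by
  constructor
  · rintro ⟨x, hx⟩
    exact ⟨_, by simp [EuclideanSpace.inner_single_left], (mem_feas_const_iff Abar bbar hα x).1 hx⟩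
  · rintro ⟨p, hp, hpv⟩
    have hlast : p.ofLp (Fin.last n) = 1 := by simpa [EuclideanSpace.inner_single_left] using hp
    have hx : WithLp.toLp 2 (Fin.snoc (Fin.init p.ofLp) 1) = p := by
      rw [← hlast, Fin.snoc_init_self]
    exact ⟨Fin.init p.ofLp, (mem_feas_const_iff Abar bbar hα _).2 (by rwa [hx])⟩

theorem rrf_nonnegOrthant_eq :
    rrf {v | ∀ i, 0 ≤ v i} Abar bbar =
      sSup {α : ℝ | 0 ≤ α ∧ ∃ p : EuclideanSpace ℝ (Fin (n + 1)),
        ⟪EuclideanSpace.single (Fin.last n) (-1), p⟫ = -1 ∧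
          ∀ i, ⟪augRow Abar bbar i, p⟫ + α * ‖p‖ ≤ 0} := by
  rw [rrf]
  congr 1
  ext α
  exact and_congr_right fun hα =>
    (and_iff_right fun _ => hα).trans (feas_const_nonempty_iff Abar bbar hα)

theorem sum_smul_augRow_add_smul (l : Fin m → ℝ) (w : ℝ) :
    ∑ i, l i • augRow Abar bbar i + w • EuclideanSpace.single (Fin.last n) (-1) =
      WithLp.toLp 2 (Fin.snoc (fun j => ∑ i, l i * Abar i j) (-(-(∑ i, l i * bbar i) + w))) := by
  ext k
  refine Fin.lastCases ?_ (fun j => ?_) k <;> simp [augRow, add_comm]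

theorem edist0_stdSimplex_eq :
    edist0 Abar bbar (stdSimplex ℝ (Fin m)) =
      sInf (norm '' hullAddRay (augRow Abar bbar) (EuclideanSpace.single (Fin.last n) (-1))) := by
  rw [edist0]
  congr 1
  ext t
  simp only [Set.mem_image, mem_hullAddRay, Epi, Set.mem_ofPred_eq]
  constructor
  · rintro ⟨_, ⟨l, hl, w, hw, rfl⟩, rfl⟩
    exact ⟨_, ⟨l, hl, w, hw, rfl⟩, by
      rw [sum_smul_augRow_add_smul, ← enorm_eq_norm_toLp, enorm_snoc_neg]⟩
  · rintro ⟨_, ⟨l, hl, w, hw, rfl⟩, rfl⟩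
    exact ⟨_, ⟨l, hl, w, hw, rfl⟩, by
      rw [sum_smul_augRow_add_smul, ← enorm_eq_norm_toLp, enorm_snoc_neg]⟩

theorem edist0_eq_sInf (B : Set (Fin m → ℝ)) :
    edist0 Abar bbar B =
      sInf {t : ℝ | ∃ z : Fin n → ℝ, ∃ s : ℝ, ∃ l ∈ B,
        _root_.enorm (Fin.snoc z s) ≤ t ∧ (∀ j, z j = ∑ i, l i * Abar i j) ∧
          -(∑ i, l i * bbar i) ≤ s} := by
  refine csInf_eq_csInf_of_forall_exists_le ?_ ?_
  · rintro _ ⟨_, ⟨l, hl, w, hw, rfl⟩, rfl⟩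
    exact ⟨_, ⟨_, _, l, hl, le_rfl, fun j => rfl, le_add_of_nonneg_right hw⟩, le_rfl⟩
  · rintro t ⟨z, s, l, hl, ht, hz, hs⟩
    refine ⟨_, ⟨Fin.snoc z s, ⟨l, hl, s + ∑ i, l i * bbar i, by linarith, ?_⟩, rfl⟩, ht⟩
    rw [funext hz]
    congr 1
    ring

end RobustLinearSystem

theorem statement19_general {m n : ℕ} (Abar : Fin m → Fin n → ℝ) (bbar : Fin m → ℝ) :
    rrf {v : Fin m → ℝ | ∀ i, 0 ≤ v i} Abar bbar =
        edist0 Abar bbar {l : Fin m → ℝ | (∀ i, 0 ≤ l i) ∧ ∑ i, l i = 1} ∧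
      edist0 Abar bbar {l : Fin m → ℝ | (∀ i, 0 ≤ l i) ∧ ∑ i, l i = 1} =
        sInf {t : ℝ | ∃ z : Fin n → ℝ, ∃ s : ℝ,
          ∃ l ∈ {l : Fin m → ℝ | (∀ i, 0 ≤ l i) ∧ ∑ i, l i = 1},
          enorm (Fin.snoc z s) ≤ t ∧ (∀ j, z j = ∑ i, l i * Abar i j) ∧
            -(∑ i, l i * bbar i) ≤ s} := by
  refine ⟨?_, edist0_eq_sInf Abar bbar _⟩
  rw [rrf_nonnegOrthant_eq, sSup_robust_eq_sInf_norm_hullAddRay _ (by simp)]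
  exact (edist0_stdSimplex_eq Abar bbar).symm

/-- exact formula for the radius of robust feasibility of uncertain LPs. -/
theorem statement19 {m n : ℕ} (Abar : Fin m → Fin n → ℝ) (bbar : Fin m → ℝ)
    (hfeas : ∃ x : Fin n → ℝ, ∀ i, (∑ j, Abar i j * x j) + bbar i ≤ 0) :
    rrf {v : Fin m → ℝ | ∀ i, 0 ≤ v i} Abar bbar =
        edist0 Abar bbar {l : Fin m → ℝ | (∀ i, 0 ≤ l i) ∧ ∑ i, l i = 1} ∧
      edist0 Abar bbar {l : Fin m → ℝ | (∀ i, 0 ≤ l i) ∧ ∑ i, l i = 1} =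
        sInf {t : ℝ | ∃ z : Fin n → ℝ, ∃ s : ℝ,
          ∃ l ∈ {l : Fin m → ℝ | (∀ i, 0 ≤ l i) ∧ ∑ i, l i = 1},
          enorm (Fin.snoc z s) ≤ t ∧ (∀ j, z j = ∑ i, l i * Abar i j) ∧
            -(∑ i, l i * bbar i) ≤ s} :=
  statement19_general Abar bbar
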